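/- Let H be a complex Hilbert space and A a bounded self-adjoint linear operator on H. Let φ, ψ : ℝ → ℂ be continuous even functions such that |φ| and |ψ| are strictly increasing on (0,∞) and |φ(t)|/|ψ(t)| is non-increasing on (0,∞). Fix b > 0 and let N(b) be as defined. Then for every x ∈ H, ‖φ(A)x‖ ≤ (|φ(b)|/|ψ(b)|)·‖ψ(A)x‖ + N(b)·‖x‖. -/

import Mathlib

/-!
Split `φ = (φ - φ_b) + φ_b`. Evenness, the growth of `|ψ|` and the monotonicity of `|φ| / |ψ|`
give `|φ - φ_b| ≤ (|φ(b)| / |ψ(b)|) |ψ|` pointwise. For a normal operator, a pointwise bound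
`|f| ≤ c |g|` yields `‖f(A) x‖ ≤ c ‖g(A) x‖`, since `f(A)* f(A) = |f|²(A) ≤ (c g)(A)* (c g)(A)`.
The remaining term is bounded by `‖φ_b(A)‖ ≤ sup |φ_b| = N(b)`.
-/

/-- The truncation `φ_b(t) = φ(t) − (φ(b)/ψ(b))·ψ(t)` for `|t| ≤ b`, `0` otherwise. -/
noncomputable def phib (φ ψ : ℝ → ℂ) (b : ℝ) : ℝ → ℂ :=
  fun t => if |t| ≤ b then φ t - (φ b / ψ b) * ψ t else 0

/-- `N(b) = sup_{t ∈ ℝ} |φ_b(t)|`. -/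
noncomputable def Nb (φ ψ : ℝ → ℂ) (b : ℝ) : ℝ :=
  ⨆ t : ℝ, ‖phib φ ψ b t‖

theorem ContinuousLinearMap.norm_apply_le_of_star_mul_self_le {𝕜 E : Type*} [RCLike 𝕜]
    [NormedAddCommGroup E] [InnerProductSpace 𝕜 E] [CompleteSpace E] {S T : E →L[𝕜] E}
    (h : star S * S ≤ star T * T) (x : E) : ‖S x‖ ≤ ‖T x‖ := by
  have hx := ((le_def _ _).1 h).re_inner_nonneg_right x
  simp only [sub_apply, mul_apply_eq_comp, star_eq_adjoint, adjoint_inner_right,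
    inner_sub_right, map_sub, inner_self_eq_norm_sq, sub_nonneg] at hx
  exact (pow_le_pow_iff_left₀ (norm_nonneg _) (norm_nonneg _) two_ne_zero).1 hx

open scoped ComplexOrder in
theorem norm_cfc_apply_le_of_norm_le {H : Type*} [NormedAddCommGroup H] [InnerProductSpace ℂ H]
    [CompleteSpace H] {A : H →L[ℂ] H} [IsStarNormal A] {f g : ℂ → ℂ} {c : ℝ} (hc : 0 ≤ c)
    (hf : ContinuousOn f (spectrum ℂ A)) (hg : ContinuousOn g (spectrum ℂ A))
    (hfg : ∀ z ∈ spectrum ℂ A, ‖f z‖ ≤ c * ‖g z‖) (x : H) :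
    ‖cfc f A x‖ ≤ c * ‖cfc g A x‖ := by
  have hcg : ContinuousOn (fun z => (c : ℂ) * g z) (spectrum ℂ A) := continuousOn_const.mul hg
  have hsq : star (cfc f A) * cfc f A ≤ star (cfc (fun z => (c : ℂ) * g z) A) *
      cfc (fun z => (c : ℂ) * g z) A := by
    rw [← cfc_star, ← cfc_star, ← cfc_mul _ _ _ hf.star hf, ← cfc_mul _ _ _ hcg.star hcg]
    refine cfc_mono (fun z hz => ?_) (hf.star.mul hf) (hcg.star.mul hcg)
    simp only [Complex.star_def, Complex.conj_mul']
    exact_mod_cast pow_le_pow_left₀ (norm_nonneg _)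
      ((hfg z hz).trans_eq (by simp [abs_of_nonneg hc])) 2
  calc ‖cfc f A x‖ ≤ ‖cfc (fun z => (c : ℂ) * g z) A x‖ :=
        ContinuousLinearMap.norm_apply_le_of_star_mul_self_le hsq x
    _ = c * ‖cfc g A x‖ := by
        rw [cfc_const_mul _ _ _ hg, smul_apply, norm_smul, Complex.norm_real,
          Real.norm_of_nonneg hc]

theorem apply_abs_of_even {α β : Type*} [AddGroup α] [LinearOrder α] {f : α → β}
    (hf : ∀ t, f (-t) = f t) (t : α) : f |t| = f t := by
  rcases abs_choice t with h | h <;> rw [h]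
  exact hf t

theorem norm_pos_of_strictMonoOn_norm {E : Type*} [NormedAddCommGroup E] {f : ℝ → E}
    (hf : StrictMonoOn (fun t => ‖f t‖) (Set.Ioi 0)) {t : ℝ} (ht : 0 < t) : 0 < ‖f t‖ :=
  (norm_nonneg (f (t / 2))).trans_lt <| hf (half_pos ht) ht (half_lt_self ht)

section Truncation

variable {φ ψ : ℝ → ℂ} {b : ℝ}

theorem continuous_phib (hφc : Continuous φ) (hψc : Continuous ψ)
    (hφe : ∀ t, φ (-t) = φ t) (hψe : ∀ t, ψ (-t) = ψ t) (hψb : ψ b ≠ 0) :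
    Continuous (phib φ ψ b) := by
  refine Continuous.if (fun t ht => ?_) (hφc.sub (continuous_const.mul hψc)) continuous_const
  have hbt : |t| = b := frontier_le_subset_eq continuous_abs continuous_const ht
  rw [← apply_abs_of_even hφe t, ← apply_abs_of_even hψe t, hbt, div_mul_cancel₀ _ hψb, sub_self]

theorem hasCompactSupport_phib : HasCompactSupport (phib φ ψ b) :=
  HasCompactSupport.intro (isCompact_Icc (a := -b) (b := b)) fun t ht => by
    rw [phib, if_neg (by rwa [abs_le, ← Set.mem_Icc])]

theorem norm_phib_le_Nb (hphib : Continuous (phib φ ψ b)) (t : ℝ) : ‖phib φ ψ b t‖ ≤ Nb φ ψ b :=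
  le_ciSup (hphib.norm.bddAbove_range_of_hasCompactSupport hasCompactSupport_phib.norm) t

theorem norm_sub_phib_le (hφe : ∀ t, φ (-t) = φ t) (hψe : ∀ t, ψ (-t) = ψ t)
    (hψm : StrictMonoOn (fun t => ‖ψ t‖) (Set.Ioi 0))
    (hratio : AntitoneOn (fun t => ‖φ t‖ / ‖ψ t‖) (Set.Ioi 0)) (hb : 0 < b) (t : ℝ) :
    ‖φ t - phib φ ψ b t‖ ≤ ‖φ b‖ / ‖ψ b‖ * ‖ψ t‖ := by
  by_cases ht : |t| ≤ b
  · simp [phib, ht]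
  · have htb : b < |t| := not_le.1 ht
    have hψt : 0 < ‖ψ t‖ :=
      apply_abs_of_even hψe t ▸ norm_pos_of_strictMonoOn_norm hψm (hb.trans htb)
    have hr := hratio hb (hb.trans htb) htb.le
    simp only [apply_abs_of_even hφe, apply_abs_of_even hψe] at hr
    simpa [phib, ht] using (div_le_iff₀ hψt).1 hr

end Truncation

theorem additive_hlp_for_operator_functions_general
    {H : Type*} [NormedAddCommGroup H] [InnerProductSpace ℂ H] [CompleteSpace H]
    (A : H →L[ℂ] H) (hA : IsSelfAdjoint A)
    (φ ψ : ℝ → ℂ) (hφc : Continuous φ) (hψc : Continuous ψ)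
    (hφe : ∀ t : ℝ, φ (-t) = φ t) (hψe : ∀ t : ℝ, ψ (-t) = ψ t)
    (hψm : StrictMonoOn (fun t => ‖ψ t‖) (Set.Ioi (0 : ℝ)))
    (hratio : AntitoneOn (fun t => ‖φ t‖ / ‖ψ t‖) (Set.Ioi (0 : ℝ)))
    (b : ℝ) (hb : 0 < b) :
    ∀ x : H,
      ‖cfc (fun z : ℂ => φ z.re) A x‖
        ≤ (‖φ b‖ / ‖ψ b‖) * ‖cfc (fun z : ℂ => ψ z.re) A x‖ + Nb φ ψ b * ‖x‖ := by
  intro x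
  have : IsStarNormal A := hA.isStarNormal
  have hψb : ψ b ≠ 0 := norm_pos_iff.1 (norm_pos_of_strictMonoOn_norm hψm hb)
  have hphib := continuous_phib hφc hψc hφe hψe hψb
  have hNb : 0 ≤ Nb φ ψ b := (norm_nonneg _).trans (norm_phib_le_Nb hphib 0)
  have hsplit : cfc (fun z : ℂ => φ z.re) A =
      cfc (fun z : ℂ => φ z.re - phib φ ψ b z.re) A + cfc (fun z : ℂ => phib φ ψ b z.re) A := by
    rw [← cfc_add ..]
    simp only [sub_add_cancel]
  calc ‖cfc (fun z : ℂ => φ z.re) A x‖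
      ≤ ‖cfc (fun z : ℂ => φ z.re - phib φ ψ b z.re) A x‖
        + ‖cfc (fun z : ℂ => phib φ ψ b z.re) A x‖ := by
        rw [hsplit, add_apply]
        exact norm_add_le _ _
    _ ≤ (‖φ b‖ / ‖ψ b‖) * ‖cfc (fun z : ℂ => ψ z.re) A x‖ + Nb φ ψ b * ‖x‖ := by
        gcongr
        · exact norm_cfc_apply_le_of_norm_le (by positivity) (by fun_prop) (by fun_prop)
            (fun z _ => norm_sub_phib_le hφe hψe hψm hratio hb z.re) x
        · exact (cfc _ A).le_of_opNorm_le (norm_cfc_le hNb fun z _ => norm_phib_le_Nb hphib z.re) x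

/-- **Additive Hardy–Littlewood–Pólya type inequality for functions of a
self-adjoint operator.** Here `g(A)` is encoded via the continuous functional
calculus of the self-adjoint operator `A` applied to `z ↦ g(Re z)`. For every
`x ∈ H`, `‖φ(A)x‖ ≤ (|φ(b)|/|ψ(b)|)·‖ψ(A)x‖ + N(b)·‖x‖`. -/
theorem additive_hlp_for_operator_functions
    {H : Type*} [NormedAddCommGroup H] [InnerProductSpace ℂ H] [CompleteSpace H]
    (A : H →L[ℂ] H) (hA : IsSelfAdjoint A)
    (φ ψ : ℝ → ℂ) (hφc : Continuous φ) (hψc : Continuous ψ)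
    (hφe : ∀ t : ℝ, φ (-t) = φ t) (hψe : ∀ t : ℝ, ψ (-t) = ψ t)
    (hφm : StrictMonoOn (fun t => ‖φ t‖) (Set.Ioi (0 : ℝ)))
    (hψm : StrictMonoOn (fun t => ‖ψ t‖) (Set.Ioi (0 : ℝ)))
    (hratio : AntitoneOn (fun t => ‖φ t‖ / ‖ψ t‖) (Set.Ioi (0 : ℝ)))
    (b : ℝ) (hb : 0 < b) :
    ∀ x : H,
      ‖cfc (fun z : ℂ => φ z.re) A x‖
        ≤ (‖φ b‖ / ‖ψ b‖) * ‖cfc (fun z : ℂ => ψ z.re) A x‖ + Nb φ ψ b * ‖x‖ :=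
  additive_hlp_for_operator_functions_general A hA φ ψ hφc hψc hφe hψe hψm hratio b hb
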